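/- (Kochen–Specker colouring impossibility in ℝ³) There is no function c : {v ∈ ℝ³ : ‖v‖ = 1} → {true, false} such that for every orthonormal basis (v₁, v₂, v₃) of ℝ³ exactly one of c(v₁), c(v₂), c(v₃) is true. -/

import Mathlib

open MeasureTheory Matrix
open scoped RealInnerProductSpace

noncomputable section

/-- ℝ³ as a Euclidean space. -/
abbrev R3 : Type := EuclideanSpace ℝ (Fin 3)

/-- The unit sphere S² ⊂ ℝ³. -/
def sphere2 : Set R3 := Metric.sphere (0 : R3) 1

/-- The surface measure on ℝ³: the 2-dimensional Hausdorff measure. Integrals over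
`sphere2` with respect to this measure realize the surface measure `dΩ` of the sphere. -/
def surfMeasure : Measure R3 := μH[2]

/-- The spin-1 matrix `S_x`. -/
def Sx : Matrix (Fin 3) (Fin 3) ℂ :=
  (Real.sqrt 2 : ℂ)⁻¹ • !![0, 1, 0; 1, 0, 1; 0, 1, 0]

/-- The spin-1 matrix `S_y`. -/
def Sy : Matrix (Fin 3) (Fin 3) ℂ :=
  (Real.sqrt 2 : ℂ)⁻¹ • !![0, -Complex.I, 0; Complex.I, 0, -Complex.I; 0, Complex.I, 0]

/-- The spin-1 matrix `S_z`. -/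
def Sz : Matrix (Fin 3) (Fin 3) ℂ := !![1, 0, 0; 0, 0, 0; 0, 0, -1]

/-- The spin-1 observable in direction `n`, `S_n = n₁ S_x + n₂ S_y + n₃ S_z`. -/
def Sdir (n : R3) : Matrix (Fin 3) (Fin 3) ℂ :=
  (n 0 : ℂ) • Sx + (n 1 : ℂ) • Sy + (n 2 : ℂ) • Sz

/-- The spectral projection of `S_n` for eigenvalue `i ∈ {1, 0, -1}`:
`P_{n,1} = (S_n² + S_n)/2`, `P_{n,0} = 1 - S_n²`, `P_{n,-1} = (S_n² - S_n)/2`. -/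
def Pproj (n : R3) (i : ℤ) : Matrix (Fin 3) (Fin 3) ℂ :=
  if i = 1 then (2 : ℂ)⁻¹ • (Sdir n ^ 2 + Sdir n)
  else if i = 0 then 1 - Sdir n ^ 2
  else if i = -1 then (2 : ℂ)⁻¹ • (Sdir n ^ 2 - Sdir n)
  else 0

/-- The unsharp spin observable `F^n(i) = ∫_{S²} w_n(m) P_{m,i} dΩ(m)`
(the matrix-valued Bochner integral, computed entrywise). -/
def Fobs (w : R3 → R3 → ℝ) (n : R3) (i : ℤ) : Matrix (Fin 3) (Fin 3) ℂ :=
  Matrix.of fun j k => ∫ m in sphere2, (w n m : ℂ) * Pproj m i j k ∂surfMeasure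

/-- `w` is a family of error densities: for each unit vector `n`, `w n` is measurable on
the sphere, nonnegative on the sphere, and integrates to 1 over the sphere. -/
def IsErrorDensityFamily (w : R3 → R3 → ℝ) : Prop :=
  ∀ n : R3, ‖n‖ = 1 →
    Measurable (sphere2.restrict (w n)) ∧
    (∀ m : R3, ‖m‖ = 1 → 0 ≤ w n m) ∧
    (∫ m in sphere2, w n m ∂surfMeasure) = 1

/-- The action of a 3×3 real matrix on ℝ³. -/
def rot (R : Matrix (Fin 3) (Fin 3) ℝ) (m : R3) : R3 :=
  (EuclideanSpace.equiv (Fin 3) ℝ).symm (R.mulVec (EuclideanSpace.equiv (Fin 3) ℝ m))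

/-- Rotation covariance of a family of error densities: `w_{Rn}(Rm) = w_n(m)` for every
rotation `R ∈ SO(3)`. -/
def IsRotationCovariant (w : R3 → R3 → ℝ) : Prop :=
  ∀ R : Matrix (Fin 3) (Fin 3) ℝ, Rᵀ * R = 1 → R.det = 1 →
    ∀ n m : R3, ‖n‖ = 1 → ‖m‖ = 1 → w (rot R n) (rot R m) = w n m

/-- The unit vector `z = (0,0,1)`. -/
def zvec : R3 := (EuclideanSpace.equiv (Fin 3) ℝ).symm ![0, 0, 1]

/-- `α₁ = 2π ∫₀^π g(θ) sin θ cos⁴(θ/2) dθ`. -/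
def alpha1 (g : ℝ → ℝ) : ℝ :=
  2 * Real.pi * ∫ θ in (0:ℝ)..Real.pi, g θ * Real.sin θ * Real.cos (θ / 2) ^ 4

/-- `α₂ = π ∫₀^π g(θ) sin θ sin²θ dθ`. -/
def alpha2 (g : ℝ → ℝ) : ℝ :=
  Real.pi * ∫ θ in (0:ℝ)..Real.pi, g θ * Real.sin θ * Real.sin θ ^ 2

/-- `α₃ = 2π ∫₀^π g(θ) sin θ sin⁴(θ/2) dθ`. -/
def alpha3 (g : ℝ → ℝ) : ℝ :=
  2 * Real.pi * ∫ θ in (0:ℝ)..Real.pi, g θ * Real.sin θ * Real.sin (θ / 2) ^ 4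

/-- `α₄ = 2π ∫₀^π g(θ) sin θ cos²θ dθ`. -/
def alpha4 (g : ℝ → ℝ) : ℝ :=
  2 * Real.pi * ∫ θ in (0:ℝ)..Real.pi, g θ * Real.sin θ * Real.cos θ ^ 2


/-!
Work in an orthonormal frame `e` and colour each integer direction `x` by the colour of the unit
vector along `∑ i, x i • e i`. Permuting the frame and negating one of its vectors, we may assume
that `(0,0,1)` and `(0,1,1)` are true. Eighteen forced deductions through directions with
coordinates in `{0, ±1, ±2}` then leave the orthogonal triad `(0,1,0), (1,0,1), (1,0,-1)` with no
true direction. Two orthogonal directions are never both true, since their cross product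
completes them to a triad.
-/

def IsOrthogonalPair (x y : Fin 3 → ℤ) : Prop :=
  x ≠ 0 ∧ y ≠ 0 ∧ x ⬝ᵥ y = 0

instance (x y : Fin 3 → ℤ) : Decidable (IsOrthogonalPair x y) := by
  unfold IsOrthogonalPair; infer_instance

def IsOrthogonalTriad (x y z : Fin 3 → ℤ) : Prop :=
  IsOrthogonalPair x y ∧ IsOrthogonalPair x z ∧ IsOrthogonalPair y z

instance (x y z : Fin 3 → ℤ) : Decidable (IsOrthogonalTriad x y z) := by
  unfold IsOrthogonalTriad; infer_instance

theorem IsOrthogonalPair.isOrthogonalTriad_crossProduct {x y : Fin 3 → ℤ}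
    (h : IsOrthogonalPair x y) : IsOrthogonalTriad x y (crossProduct x y) := by
  obtain ⟨hx, hy, hxy⟩ := h
  have hcross : crossProduct x y ≠ 0 := by
    rw [Ne, ← dotProduct_self_eq_zero, cross_dot_cross, hxy, dotProduct_comm y x, hxy]
    simpa [dotProduct_self_eq_zero] using And.intro hx hy
  exact ⟨⟨hx, hy, hxy⟩, ⟨hx, hcross, dot_self_cross x y⟩, ⟨hy, hcross, dot_cross_self x y⟩⟩

theorem IsOrthogonalTriad.pairwise_dotProduct_eq_zero {x y z : Fin 3 → ℤ}
    (h : IsOrthogonalTriad x y z) : Pairwise fun a b => ![x, y, z] a ⬝ᵥ ![x, y, z] b = 0 := by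
  obtain ⟨⟨-, -, hxy⟩, ⟨-, -, hxz⟩, ⟨-, -, hyz⟩⟩ := h
  intro a b hab
  fin_cases a <;> fin_cases b <;> simp_all [dotProduct_comm]

theorem IsOrthogonalTriad.ne_zero {x y z : Fin 3 → ℤ} (h : IsOrthogonalTriad x y z)
    (a : Fin 3) : ![x, y, z] a ≠ 0 := by
  obtain ⟨⟨hx, hy, -⟩, ⟨-, hz, -⟩, -⟩ := h
  fin_cases a <;> assumption

def IsTriadColouring (κ : (Fin 3 → ℤ) → Prop) : Prop :=
  ∀ x y z, IsOrthogonalTriad x y z → ∃! a, κ (![x, y, z] a)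

namespace IsTriadColouring

variable {κ : (Fin 3 → ℤ) → Prop} {x y z : Fin 3 → ℤ}

theorem of_not_of_not (hκ : IsTriadColouring κ) (h : IsOrthogonalTriad x y z) (hx : ¬κ x)
    (hy : ¬κ y) : κ z := by
  obtain ⟨a, ha, -⟩ := hκ x y z h
  fin_cases a
  exacts [absurd ha hx, absurd ha hy, ha]

theorem not_of_isOrthogonalPair (hκ : IsTriadColouring κ) (hx : κ x) (h : IsOrthogonalPair x y) :
    ¬κ y := fun hy =>
  absurd ((hκ x y _ h.isOrthogonalTriad_crossProduct).unique (y₁ := 0) (y₂ := 1) hx hy)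
    (by decide)

theorem false_of_001_011 (hκ : IsTriadColouring κ) (h001 : κ ![0, 0, 1]) (h011 : κ ![0, 1, 1]) :
    False := by
  have h010 : ¬κ ![0, 1, 0] := hκ.not_of_isOrthogonalPair h001 (by decide)
  have h1m0 : ¬κ ![1, -1, 0] := hκ.not_of_isOrthogonalPair h001 (by decide)
  have h110 : ¬κ ![1, 1, 0] := hκ.not_of_isOrthogonalPair h001 (by decide)
  have h01m : ¬κ ![0, 1, -1] := hκ.not_of_isOrthogonalPair h011 (by decide)
  have h1m1 : ¬κ ![1, -1, 1] := hκ.not_of_isOrthogonalPair h011 (by decide)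
  have h11m : ¬κ ![1, 1, -1] := hκ.not_of_isOrthogonalPair h011 (by decide)
  have h1mm2 : κ ![1, -1, -2] := hκ.of_not_of_not (by decide) h1m1 h110
  have h112 : κ ![1, 1, 2] := hκ.of_not_of_not (by decide) h1m0 h11m
  have h201 : ¬κ ![2, 0, 1] := hκ.not_of_isOrthogonalPair h1mm2 (by decide)
  have h20m : ¬κ ![2, 0, -1] := hκ.not_of_isOrthogonalPair h112 (by decide)
  have h10m2 : κ ![1, 0, -2] := hκ.of_not_of_not (by decide) h010 h201
  have h102 : κ ![1, 0, 2] := hκ.of_not_of_not (by decide) h010 h20m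
  have h211 : ¬κ ![2, 1, 1] := hκ.not_of_isOrthogonalPair h10m2 (by decide)
  have h2mm : ¬κ ![2, -1, -1] := hκ.not_of_isOrthogonalPair h102 (by decide)
  have h1mm : κ ![1, -1, -1] := hκ.of_not_of_not (by decide) h01m h211
  have h111 : κ ![1, 1, 1] := hκ.of_not_of_not (by decide) h01m h2mm
  have h101 : ¬κ ![1, 0, 1] := hκ.not_of_isOrthogonalPair h1mm (by decide)
  have h10m : ¬κ ![1, 0, -1] := hκ.not_of_isOrthogonalPair h111 (by decide)
  exact h101 (hκ.of_not_of_not (by decide) h010 h10m)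

end IsTriadColouring

section InnerProductSpace

variable {E : Type*} [NormedAddCommGroup E] [InnerProductSpace ℝ E]

def IsKSColouring (c : E → Bool) : Prop :=
  ∀ v : Fin 3 → E, Orthonormal ℝ v → ∃! a, c (v a) = true

def frameVec (e : Fin 3 → E) (x : Fin 3 → ℤ) : E :=
  ∑ i, (x i : ℝ) • e i

def rayColour (c : E → Bool) (e : Fin 3 → E) (x : Fin 3 → ℤ) : Prop :=
  c (‖frameVec e x‖⁻¹ • frameVec e x) = true

variable {e : Fin 3 → E}

theorem inner_frameVec (he : Orthonormal ℝ e) (x y : Fin 3 → ℤ) :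
    ⟪frameVec e x, frameVec e y⟫ = ((x ⬝ᵥ y : ℤ) : ℝ) := by
  simp [frameVec, he.inner_sum, dotProduct]

theorem frameVec_ne_zero (he : Orthonormal ℝ e) {x : Fin 3 → ℤ} (hx : x ≠ 0) :
    frameVec e x ≠ 0 := by
  rw [Ne, ← inner_self_eq_zero (𝕜 := ℝ), inner_frameVec he]
  exact_mod_cast mt dotProduct_self_eq_zero.mp hx

theorem orthonormal_inv_norm_smul {ι : Type*} {v : ι → E} (h0 : ∀ i, v i ≠ 0)
    (hv : Pairwise fun i j => ⟪v i, v j⟫ = 0) : Orthonormal ℝ fun i => ‖v i‖⁻¹ • v i :=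
  ⟨fun i => norm_smul_inv_norm (h0 i), fun i j hij => by
    simp only [real_inner_smul_left, real_inner_smul_right, hv hij, mul_zero]⟩

theorem IsKSColouring.isTriadColouring_rayColour {c : E → Bool} (hc : IsKSColouring c)
    (he : Orthonormal ℝ e) : IsTriadColouring (rayColour c e) := fun x y z h =>
  hc _ <| orthonormal_inv_norm_smul (fun a => frameVec_ne_zero he (h.ne_zero a))
    fun a b hab => by
      simp only [inner_frameVec he, h.pairwise_dotProduct_eq_zero hab, Int.cast_zero]

theorem IsKSColouring.false_of_rayColour_001 {c : E → Bool} (hc : IsKSColouring c)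
    (he : Orthonormal ℝ e) (h001 : rayColour c e ![0, 0, 1]) : False := by
  have hκ := hc.isTriadColouring_rayColour he
  have h100 : ¬rayColour c e ![1, 0, 0] := hκ.not_of_isOrthogonalPair h001 (by decide)
  by_cases h011 : rayColour c e ![0, 1, 1]
  · exact hκ.false_of_001_011 h001 h011
  have h0m1 : rayColour c e ![0, -1, 1] := hκ.of_not_of_not (by decide) h100 h011
  have he' : Orthonormal ℝ ![e 0, -e 1, e 2] :=
    he.orthonormal_of_forall_eq_or_eq_neg fun i => by fin_cases i <;> simp
  refine (hc.isTriadColouring_rayColour he').false_of_001_011 ?_ ?_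
  · simpa [rayColour, frameVec, Fin.sum_univ_three] using h001
  · simpa [rayColour, frameVec, Fin.sum_univ_three] using h0m1

theorem not_isKSColouring (he : Orthonormal ℝ e) (c : E → Bool) : ¬IsKSColouring c := by
  intro hc
  obtain ⟨a, ha, -⟩ := hc e he
  refine hc.false_of_rayColour_001 (he.comp _ (Equiv.swap a 2).injective) ?_
  simpa [rayColour, frameVec, Fin.sum_univ_three, he.1 a] using ha

end InnerProductSpace

/-- Kochen–Specker colouring impossibility in ℝ³: There is no
true/false colouring of the unit vectors of ℝ³ such that every orthonormal basis
(orthogonal tripod) of ℝ³ contains exactly one true vector. -/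
theorem kochen_specker_no_colouring :
    ¬ ∃ c : R3 → Bool,
      ∀ v : Fin 3 → R3, (∀ a, ‖v a‖ = 1) →
        (∀ a b, a ≠ b → ⟪v a, v b⟫ = 0) →
        ∃! a, c (v a) = true := by
  rintro ⟨c, hc⟩
  exact not_isKSColouring (EuclideanSpace.basisFun (Fin 3) ℝ).orthonormal c
    fun v hv => hc v hv.1 fun _ _ hab => hv.2 hab
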